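/- The map f: Σ → Σ defined by f(u) = v, where v₁ = u₁ and for m ≥ 2, v_m = (−1)^{α_{m−1}} u_m + α_{m−1} in ℤ/6 with α_k = u₁ + ⋯ + u_k ∈ ℤ/6, is a bijection of Σ onto itself which is an isometry of (Σ, δ_r): δ_r(f(u), f(w)) = δ_r(u,w) for all u,w ∈ Σ. Moreover, for each n the first n letters of f(u) depend only on the first n letters of u, and the induced map on Xⁿ (words of length n) is a bijection. -/
import Mathlib


open Classical

/-- The space `Σ` of infinite words over the alphabet `X = {0,1,2,3,4,5} = ℤ/6`
(indexed from `0`: the letter `w₁` of the paper is `w 0`). -/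
abbrev Word := ℕ → ZMod 6

/-- The metric `δ_r` on a word space: `δ_r(w,v) = r^ℓ` where `ℓ ≥ 1` is the first
(1-indexed) position at which `w` and `v` differ, and `δ_r(w,w) = 0`. -/
noncomputable def wordDist {X : Type*} (r : ℝ) (w v : ℕ → X) : ℝ :=
  if h : w = v then 0
  else r ^ (Nat.find (Function.ne_iff.mp h) + 1)

/-- Prepending a letter to an infinite word: `σ_i(w) = iw`. -/
def prepend {X : Type*} (i : X) (w : ℕ → X) : ℕ → X
  | 0 => i
  | n + 1 => w n

/-- `α_k = u₁ + ⋯ + u_k` in `ℤ/6` (the sum of the first `k` letters of `u`). -/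
def alphaSum (u : Word) (k : ℕ) : ZMod 6 := ∑ j ∈ Finset.range k, u j

/-- The map `f : Σ → Σ`, `f(u) = v` with `v₁ = u₁` and
`v_m = (−1)^{α_{m−1}} u_m + α_{m−1}` (mod 6); here `(−1)^α` is `+1` when `α ∈ ℤ/6` is
even and `−1` when `α` is odd.  (In 0-indexed form, position `m` corresponds to index
`m−1`, and `α_0 = 0` is even, so the case `v₁ = u₁` is subsumed.) -/
noncomputable def fMap (u : Word) : Word := fun n =>
  (if Even (alphaSum u n) then u n else -(u n)) + alphaSum u n

lemma alphaSum_congr (u w : Word) (n : ℕ) (h : ∀ m < n, u m = w m) :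
    alphaSum u n = alphaSum w n :=
  Finset.sum_congr rfl fun j hj => h j (Finset.mem_range.mp hj)

lemma fMap_congr (n : ℕ) (u w : Word) (h : ∀ m < n, u m = w m) :
    ∀ m < n, fMap u m = fMap w m := by
  intro m hm
  have ha : alphaSum u m = alphaSum w m :=
    alphaSum_congr u w m fun j hj => h j (hj.trans hm)
  unfold fMap
  rw [ha, h m hm]

lemma inj_below (u w : Word) (n : ℕ) (h : ∀ m < n, fMap u m = fMap w m) :
    ∀ m < n, u m = w m := by
  intro m
  induction m using Nat.strong_induction_on with
  | _ m ih =>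
    intro hm
    have ha : alphaSum u m = alphaSum w m :=
      alphaSum_congr u w m fun j hj => ih j hj (hj.trans hm)
    have hf := h m hm
    unfold fMap at hf
    rw [ha] at hf
    have h2 : (if Even (alphaSum w m) then u m else -(u m)) =
        (if Even (alphaSum w m) then w m else -(w m)) := add_right_cancel hf
    split at h2
    · exact h2
    · exact neg_inj.mp h2

lemma fMap_injective : Function.Injective fMap := by
  intro u w h
  funext m
  exact inj_below u w (m + 1) (fun k _ => congrFun h k) m (Nat.lt_succ_self m)

noncomputable def invStep (v : Word) (a : ZMod 6) (n : ℕ) : ZMod 6 :=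
  if Even a then v n - a else a - v n

noncomputable def invAlpha (v : Word) : ℕ → ZMod 6
  | 0 => 0
  | n + 1 => invAlpha v n + invStep v (invAlpha v n) n

noncomputable def invWord (v : Word) : Word := fun n => invStep v (invAlpha v n) n

lemma alphaSum_invWord (v : Word) (n : ℕ) : alphaSum (invWord v) n = invAlpha v n := by
  induction n with
  | zero => simp [alphaSum, invAlpha]
  | succ n ih =>
    rw [alphaSum, Finset.sum_range_succ, ← alphaSum, ih]
    rfl

lemma fMap_invWord (v : Word) : fMap (invWord v) = v := by
  funext n
  unfold fMap
  rw [alphaSum_invWord]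
  show (if Even (invAlpha v n) then invStep v (invAlpha v n) n
      else -(invStep v (invAlpha v n) n)) + invAlpha v n = v n
  unfold invStep
  by_cases h : Even (invAlpha v n) <;> simp [h]

lemma fMap_surjective : Function.Surjective fMap :=
  fun v => ⟨invWord v, fMap_invWord v⟩

lemma find_irrel {p : ℕ → Prop} (i j : DecidablePred p) (hp : ∃ n, p n) :
    @Nat.find p i hp = @Nat.find p j hp := by congr!

lemma fMap_iso (r : ℝ) (u w : Word) :
    wordDist r (fMap u) (fMap w) = wordDist r u w := by
  by_cases huw : u = w
  · subst huw; simp [wordDist]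
  · have hf : fMap u ≠ fMap w := fun h => huw (fMap_injective h)
    rw [wordDist, wordDist, dif_neg hf, dif_neg huw]
    congr 2
    rw [find_irrel _ inferInstance (Function.ne_iff.mp hf),
        find_irrel _ inferInstance (Function.ne_iff.mp huw)]
    set h1 := Function.ne_iff.mp hf
    set h2 := Function.ne_iff.mp huw
    apply le_antisymm
    · refine Nat.find_le ?_
      intro hc
      have hbelow : ∀ m < Nat.find h2, u m = w m := fun m hm => by
        by_contra hne
        exact Nat.find_min h2 hm hne
      have : ∀ m < Nat.find h2 + 1, fMap u m = fMap w m := by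
        intro m hm
        rcases Nat.lt_succ_iff_lt_or_eq.mp hm with hm' | hm'
        · exact fMap_congr (Nat.find h2) u w hbelow m hm'
        · subst hm'; exact hc
      exact Nat.find_spec h2
        (inj_below u w (Nat.find h2 + 1) this (Nat.find h2) (Nat.lt_succ_self _))
    · refine Nat.find_le ?_
      intro hc
      have hfbelow : ∀ m < Nat.find h1, fMap u m = fMap w m := fun m hm => by
        by_contra hne
        exact Nat.find_min h1 hm hne
      have hbelow : ∀ m < Nat.find h1, u m = w m := inj_below u w _ hfbelow
      have : ∀ m < Nat.find h1 + 1, u m = w m := by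
        intro m hm
        rcases Nat.lt_succ_iff_lt_or_eq.mp hm with hm' | hm'
        · exact hbelow m hm'
        · subst hm'; exact hc
      exact Nat.find_spec h1
        (fMap_congr (Nat.find h1 + 1) u w this (Nat.find h1) (Nat.lt_succ_self _))

/-- `f` is a bijection of `Σ` which is an isometry for `δ_r`; moreover the
first `n` letters of `f(u)` depend only on the first `n` letters of `u`, and the induced
map on words of length `n` is a bijection. -/
theorem stmt7 (r : ℝ) (hr0 : 0 < r) (hr1 : r < 1) :
    Function.Bijective fMap ∧
    (∀ u w : Word, wordDist r (fMap u) (fMap w) = wordDist r u w) ∧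
    (∀ n : ℕ, ∀ u w : Word, (∀ m < n, u m = w m) → ∀ m < n, fMap u m = fMap w m) ∧
    (∀ n : ℕ, Function.Bijective (fun x : Fin n → ZMod 6 =>
      fun i : Fin n => fMap (fun m => if h : m < n then x ⟨m, h⟩ else 0) i)) := by
  refine ⟨⟨fMap_injective, fMap_surjective⟩, fMap_iso r, fMap_congr, fun n => ⟨?_, ?_⟩⟩
  · intro x y h
    set u : Word := fun m => if h : m < n then x ⟨m, h⟩ else 0 with hu
    set w : Word := fun m => if h : m < n then y ⟨m, h⟩ else 0 with hw
    have hf : ∀ m < n, fMap u m = fMap w m := fun m hm => congrFun h ⟨m, hm⟩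
    have huw := inj_below u w n hf
    funext i
    have := huw i i.isLt
    simpa [hu, hw, i.isLt] using this
  · intro y
    set v : Word := fun m => if h : m < n then y ⟨m, h⟩ else 0 with hv
    refine ⟨fun i => invWord v i, ?_⟩
    funext i
    show fMap (fun m => if h : m < n then invWord v ((⟨m, h⟩ : Fin n) : ℕ) else 0) i = y i
    have hagree : ∀ m < n,
        (fun m => if h : m < n then invWord v ((⟨m, h⟩ : Fin n) : ℕ) else (0 : ZMod 6)) m
          = invWord v m := fun m hm => by simp [hm]
    rw [fMap_congr n _ (invWord v) hagree i i.isLt, fMap_invWord]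
    simp [hv, i.isLt]
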